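/- arXiv:2604.25442 — 7 statements merged into one kernel-verified Lean document; each statement's English description precedes it below -/
import Mathlib

section
/- Let I be a dyadic interval and let U be a finite collection of dyadic subintervals of I such that every point x of I is covered by at least l intervals from U (counted with multiplicity, i.e. the sum of indicator functions of intervals in U is at least l at every point of I). Then the cardinality of U is at least 2^l - 1. -/
open MeasureTheory Set

/-- The dyadic interval `Δ_j^m = [(j-1)/2^m, j/2^m)`. -/
noncomputable def dyadicI (m j : ℤ) : Set ℝ :=
  Set.Ico ((j - 1 : ℝ) / 2 ^ m) ((j : ℝ) / 2 ^ m)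

/-!
Split `I` into its two dyadic halves; every member of `U` other than `I` itself lies in one of
them. If `I ∈ U`, the remaining intervals inside each half cover that half `l - 1` times, so by
induction `|U| ≥ 1 + 2 (2^(l-1) - 1) = 2^l - 1`. If `I ∉ U`, the members inside the left half
already cover it `l` times, and they form a proper subfamily since the right half must be
covered too; induction on `U` applies again.
-/

lemma dyadicI_left_lt_right (m j : ℤ) : ((j : ℝ) - 1) / 2 ^ m < j / 2 ^ m :=
  div_lt_div_of_pos_right (by linarith) (by positivity)

lemma dyadicI_nonempty (m j : ℤ) : (dyadicI m j).Nonempty :=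
  nonempty_Ico.mpr (dyadicI_left_lt_right m j)

lemma dyadicI_add_subset_iff (m j j' : ℤ) (k : ℕ) :
    dyadicI (m + k) j ⊆ dyadicI m j' ↔ (j' - 1) * 2 ^ k ≤ j - 1 ∧ j ≤ j' * 2 ^ k := by
  have hpos : (0 : ℝ) < 2 ^ (m + k) := by positivity
  have rescale (i : ℝ) : i / 2 ^ m = i * 2 ^ k / 2 ^ (m + k) := by
    rw [zpow_add₀ two_ne_zero, zpow_natCast]; field_simp
  rw [dyadicI, dyadicI, Ico_subset_Ico_iff (dyadicI_left_lt_right _ _),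
    rescale, rescale, div_le_div_iff_of_pos_right hpos, div_le_div_iff_of_pos_right hpos]
  norm_cast

lemma le_of_dyadicI_subset {m j m' j' : ℤ} (h : dyadicI m j ⊆ dyadicI m' j') : m' ≤ m := by
  rw [dyadicI, dyadicI, Ico_subset_Ico_iff (dyadicI_left_lt_right _ _)] at h
  have hlen : ((2 : ℝ) ^ m)⁻¹ ≤ ((2 : ℝ) ^ m')⁻¹ := by
    have e (n i : ℤ) : (i : ℝ) / 2 ^ n - (i - 1) / 2 ^ n = ((2 : ℝ) ^ n)⁻¹ := by field_simp; ring
    linarith [e m j, e m' j']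
  rw [← zpow_neg, ← zpow_neg, zpow_le_zpow_iff_right₀ one_lt_two] at hlen
  omega

lemma dyadicI_disjoint_add_one (m j : ℤ) : Disjoint (dyadicI m j) (dyadicI m (j + 1)) := by
  simp [dyadicI]

lemma dyadicI_left_half_subset (m j : ℤ) : dyadicI (m + 1) (2 * j - 1) ⊆ dyadicI m j := by
  have := dyadicI_add_subset_iff m (2 * j - 1) j 1
  push_cast at this
  exact this.mpr ⟨by omega, by omega⟩

lemma dyadicI_right_half_subset (m j : ℤ) : dyadicI (m + 1) (2 * j) ⊆ dyadicI m j := by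
  have := dyadicI_add_subset_iff m (2 * j) j 1
  push_cast at this
  exact this.mpr ⟨by omega, by omega⟩

lemma dyadicI_halves_disjoint (m j : ℤ) :
    Disjoint (dyadicI (m + 1) (2 * j - 1)) (dyadicI (m + 1) (2 * j)) := by
  simpa using dyadicI_disjoint_add_one (m + 1) (2 * j - 1)

lemma dyadicI_subset_trichotomy {m j m0 j0 : ℤ} (h : dyadicI m j ⊆ dyadicI m0 j0) :
    (m, j) = (m0, j0) ∨ dyadicI m j ⊆ dyadicI (m0 + 1) (2 * j0 - 1) ∨
      dyadicI m j ⊆ dyadicI (m0 + 1) (2 * j0) := by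
  obtain ⟨k, rfl⟩ := Int.le.dest (le_of_dyadicI_subset h)
  rw [dyadicI_add_subset_iff] at h
  cases k with
  | zero =>
    left
    simp only [pow_zero, mul_one] at h
    simp only [Nat.cast_zero, add_zero, Prod.mk.injEq, true_and]
    omega
  | succ k =>
    right
    rw [show m0 + ((k + 1 : ℕ) : ℤ) = m0 + 1 + k by push_cast; ring,
      dyadicI_add_subset_iff, dyadicI_add_subset_iff]
    rw [pow_succ] at h
    rcases le_or_gt j ((2 * j0 - 1) * 2 ^ k) with hj | hj
    · exact Or.inl ⟨by linarith, hj⟩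
    · exact Or.inr ⟨by linarith, by linarith⟩

section

open Classical
open scoped Finset

noncomputable def coverCount (U : Finset (ℤ × ℤ)) (x : ℝ) : ℕ :=
  #{p ∈ U | x ∈ dyadicI p.1 p.2}

lemma sum_indicator_eq_coverCount (U : Finset (ℤ × ℤ)) (x : ℝ) :
    ∑ p ∈ U, (dyadicI p.1 p.2).indicator (fun _ => (1 : ℝ)) x = coverCount U x := by
  simp [indicator_apply, Finset.sum_boole, coverCount]

lemma coverCount_le_coverCount_erase_add_one (U : Finset (ℤ × ℤ)) (a : ℤ × ℤ) (x : ℝ) :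
    coverCount U x ≤ coverCount (U.erase a) x + 1 := by
  have := Finset.pred_card_le_card_erase (s := {p ∈ U | x ∈ dyadicI p.1 p.2}) (a := a)
  rw [← Finset.filter_erase] at this
  unfold coverCount
  omega

lemma nonempty_of_coverCount_pos {U : Finset (ℤ × ℤ)} {x : ℝ} (h : 0 < coverCount U x) :
    U.Nonempty :=
  (Finset.card_pos.mp h).mono (Finset.filter_subset _ _)

lemma coverCount_filter_subset {U : Finset (ℤ × ℤ)} {H : Set ℝ} {x : ℝ}
    (h : ∀ p ∈ U, x ∈ dyadicI p.1 p.2 → dyadicI p.1 p.2 ⊆ H) :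
    coverCount {p ∈ U | dyadicI p.1 p.2 ⊆ H} x = coverCount U x := by
  unfold coverCount
  rw [Finset.filter_filter]
  exact congrArg _ (Finset.filter_congr fun p hp => ⟨And.right, fun hx => ⟨h p hp hx, hx⟩⟩)

section Halves

variable {U : Finset (ℤ × ℤ)} {m0 j0 : ℤ}

noncomputable def leftFamily (U : Finset (ℤ × ℤ)) (m0 j0 : ℤ) : Finset (ℤ × ℤ) :=
  {p ∈ U.erase (m0, j0) | dyadicI p.1 p.2 ⊆ dyadicI (m0 + 1) (2 * j0 - 1)}

noncomputable def rightFamily (U : Finset (ℤ × ℤ)) (m0 j0 : ℤ) : Finset (ℤ × ℤ) :=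
  {p ∈ U.erase (m0, j0) | dyadicI p.1 p.2 ⊆ dyadicI (m0 + 1) (2 * j0)}

lemma leftFamily_subset_erase : leftFamily U m0 j0 ⊆ U.erase (m0, j0) :=
  Finset.filter_subset _ _

lemma rightFamily_subset_erase : rightFamily U m0 j0 ⊆ U.erase (m0, j0) :=
  Finset.filter_subset _ _

lemma subset_of_mem_leftFamily :
    ∀ p ∈ leftFamily U m0 j0, dyadicI p.1 p.2 ⊆ dyadicI (m0 + 1) (2 * j0 - 1) :=
  fun _ hp => (Finset.mem_filter.mp hp).2

lemma subset_of_mem_rightFamily :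
    ∀ p ∈ rightFamily U m0 j0, dyadicI p.1 p.2 ⊆ dyadicI (m0 + 1) (2 * j0) :=
  fun _ hp => (Finset.mem_filter.mp hp).2

lemma disjoint_leftFamily_rightFamily : Disjoint (leftFamily U m0 j0) (rightFamily U m0 j0) := by
  refine Finset.disjoint_left.mpr fun p hL hR => ?_
  obtain ⟨x, hx⟩ := dyadicI_nonempty p.1 p.2
  exact (dyadicI_halves_disjoint m0 j0).notMem_of_mem_left
    (subset_of_mem_leftFamily p hL hx) (subset_of_mem_rightFamily p hR hx)

lemma card_leftFamily_add_card_rightFamily_le (U : Finset (ℤ × ℤ)) (m0 j0 : ℤ) :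
    #(leftFamily U m0 j0) + #(rightFamily U m0 j0) ≤ #(U.erase (m0, j0)) := by
  rw [← Finset.card_union_of_disjoint disjoint_leftFamily_rightFamily]
  exact Finset.card_le_card (Finset.union_subset leftFamily_subset_erase rightFamily_subset_erase)

lemma leftFamily_ssubset (hI : (m0, j0) ∉ U) (hR : (rightFamily U m0 j0).Nonempty) :
    leftFamily U m0 j0 ⊂ U := by
  have hU : U.erase (m0, j0) = U := Finset.erase_eq_of_notMem hI
  obtain ⟨p, hp⟩ := hR
  rw [Finset.ssubset_iff_of_subset (leftFamily_subset_erase.trans hU.subset)]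
  exact ⟨p, hU.subset (rightFamily_subset_erase hp), Finset.disjoint_right.mp
    disjoint_leftFamily_rightFamily hp⟩

lemma subset_half_of_mem_erase (hsub : ∀ p ∈ U, dyadicI p.1 p.2 ⊆ dyadicI m0 j0)
    {p : ℤ × ℤ} (hp : p ∈ U.erase (m0, j0)) :
    dyadicI p.1 p.2 ⊆ dyadicI (m0 + 1) (2 * j0 - 1) ∨ dyadicI p.1 p.2 ⊆ dyadicI (m0 + 1) (2 * j0) :=
  (dyadicI_subset_trichotomy (hsub p (Finset.mem_of_mem_erase hp))).resolve_left
    (Finset.ne_of_mem_erase hp)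

lemma coverCount_leftFamily (hsub : ∀ p ∈ U, dyadicI p.1 p.2 ⊆ dyadicI m0 j0) {x : ℝ}
    (hx : x ∈ dyadicI (m0 + 1) (2 * j0 - 1)) :
    coverCount (leftFamily U m0 j0) x = coverCount (U.erase (m0, j0)) x :=
  coverCount_filter_subset fun _ hp hxp => (subset_half_of_mem_erase hsub hp).resolve_right
    fun hR => (dyadicI_halves_disjoint m0 j0).notMem_of_mem_left hx (hR hxp)

lemma coverCount_rightFamily (hsub : ∀ p ∈ U, dyadicI p.1 p.2 ⊆ dyadicI m0 j0) {x : ℝ}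
    (hx : x ∈ dyadicI (m0 + 1) (2 * j0)) :
    coverCount (rightFamily U m0 j0) x = coverCount (U.erase (m0, j0)) x :=
  coverCount_filter_subset fun _ hp hxp => (subset_half_of_mem_erase hsub hp).resolve_left
    fun hL => (dyadicI_halves_disjoint m0 j0).notMem_of_mem_right hx (hL hxp)

end Halves

theorem two_pow_sub_one_le_card_of_le_coverCount {m0 j0 : ℤ} {l : ℕ} {U : Finset (ℤ × ℤ)}
    (hsub : ∀ p ∈ U, dyadicI p.1 p.2 ⊆ dyadicI m0 j0)
    (hcov : ∀ x ∈ dyadicI m0 j0, l ≤ coverCount U x) :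
    2 ^ l - 1 ≤ #U := by
  induction U using Finset.strongInduction generalizing m0 j0 l with
  | H U ih =>
  cases l with
  | zero => simp
  | succ l =>
  by_cases hI : (m0, j0) ∈ U
  · have hUI : U.erase (m0, j0) ⊂ U := Finset.erase_ssubset hI
    have hL := ih _ (leftFamily_subset_erase.trans_ssubset hUI) subset_of_mem_leftFamily
      (l := l) fun x hx => by
        have := hcov x (dyadicI_left_half_subset m0 j0 hx)
        have := coverCount_le_coverCount_erase_add_one U (m0, j0) x
        rw [coverCount_leftFamily hsub hx]
        omega
    have hR := ih _ (rightFamily_subset_erase.trans_ssubset hUI) subset_of_mem_rightFamily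
      (l := l) fun x hx => by
        have := hcov x (dyadicI_right_half_subset m0 j0 hx)
        have := coverCount_le_coverCount_erase_add_one U (m0, j0) x
        rw [coverCount_rightFamily hsub hx]
        omega
    have := card_leftFamily_add_card_rightFamily_le U m0 j0
    have := Finset.card_erase_add_one hI
    rw [pow_succ]
    omega
  · have hU : U.erase (m0, j0) = U := Finset.erase_eq_of_notMem hI
    have hR : (rightFamily U m0 j0).Nonempty := by
      obtain ⟨x, hx⟩ := dyadicI_nonempty (m0 + 1) (2 * j0)
      refine nonempty_of_coverCount_pos (x := x) ?_
      rw [coverCount_rightFamily hsub hx, hU]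
      exact (hcov x (dyadicI_right_half_subset m0 j0 hx)).trans_lt' l.succ_pos
    have hUL := leftFamily_ssubset hI hR
    refine (ih _ hUL subset_of_mem_leftFamily fun x hx => ?_).trans (Finset.card_le_card hUL.subset)
    rw [coverCount_leftFamily hsub hx, hU]
    exact hcov x (dyadicI_left_half_subset m0 j0 hx)

end

/-- If a finite collection `U` of dyadic subintervals of a dyadic interval `I`
covers every point of `I` at least `l` times (counted with multiplicity), then
`U` has at least `2^l - 1` elements. -/
theorem stmt_0 (m0 j0 : ℤ) (l : ℕ) (U : Finset (ℤ × ℤ))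
    (hsub : ∀ p ∈ U, dyadicI p.1 p.2 ⊆ dyadicI m0 j0)
    (hcov : ∀ x ∈ dyadicI m0 j0,
      (l : ℝ) ≤ ∑ p ∈ U, (dyadicI p.1 p.2).indicator (fun _ => (1 : ℝ)) x) :
    2 ^ l - 1 ≤ U.card := by
  refine two_pow_sub_one_le_card_of_le_coverCount hsub fun x hx => ?_
  exact_mod_cast sum_indicator_eq_coverCount U x ▸ hcov x hx
end

section
/- There exists an absolute constant C > 0 such that for every finite collection Δ_{m_1}, ..., Δ_{m_N} of N ≥ 2 dyadic intervals in ℝ and every choice of positive numbers c_1, ..., c_N one has ‖∑_{j=1}^N c_j 𝟙_{Δ_{m_j}}‖_{L²} ≤ C √(log N) · (∑_{j=1}^N c_j² |Δ_{m_j}|)^{1/2}. -/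
/-!
Expanding the square, `‖∑ c_j 𝟙_{Δ_j}‖₂² = ∑_{j,k} c_j c_k |Δ_j ∩ Δ_k|`. Dyadic intervals of
the same length are disjoint, so for fixed `j` and each scale the overlaps `|Δ_j ∩ Δ_k|` add up
to at most `|Δ_j|`; after AM-GM, the pairs whose scales differ by less than `L ≈ 2 log₂ N`
contribute `O(L) ∑ c_j² |Δ_j|`. For scales `d ≥ L` apart,
`|Δ_j ∩ Δ_k| ≤ min(|Δ_j|, |Δ_k|) = 2^{-d/2} (|Δ_j| |Δ_k|)^{1/2} ≤ (|Δ_j| |Δ_k|)^{1/2} / N`,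
so the at most `N²` such pairs contribute `O(∑ c_j² |Δ_j|)`.
-/

open MeasureTheory Set
open scoped ENNReal

section GramFormula

variable {α ι : Type*} [MeasurableSpace α] {μ : Measure α} [Fintype ι] {A : ι → Set α}

lemma memLp_sum_mul_indicator (hA : ∀ j, MeasurableSet (A j)) (hfin : ∀ j, μ (A j) ≠ ∞)
    (c : ι → ℝ) (p : ℝ≥0∞) :
    MemLp (fun x => ∑ j, c j * (A j).indicator (fun _ => (1 : ℝ)) x) p μ :=
  memLp_finsetSum _ fun j _ =>
    (memLp_indicator_const p (hA j) (1 : ℝ) (Or.inr (hfin j))).const_mul (c j)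

lemma integral_sq_sum_mul_indicator (hA : ∀ j, MeasurableSet (A j))
    (hfin : ∀ j, μ (A j) ≠ ∞) (c : ι → ℝ) :
    ∫ x, (∑ j, c j * (A j).indicator (fun _ => (1 : ℝ)) x) ^ 2 ∂μ =
      ∑ j, ∑ k, c j * c k * μ.real (A j ∩ A k) := by
  have hint : ∀ j k, Integrable ((A j ∩ A k).indicator (fun _ => (1 : ℝ))) μ := fun j k =>
    (integrable_indicator_iff ((hA j).inter (hA k))).2 <|
      integrableOn_const (measure_ne_top_of_subset inter_subset_left (hfin j))
  have hexpand : ∀ x, (∑ j, c j * (A j).indicator (fun _ => (1 : ℝ)) x) ^ 2 =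
      ∑ j, ∑ k, c j * c k * (A j ∩ A k).indicator (fun _ => (1 : ℝ)) x := fun x => by
    simp only [sq, Finset.sum_mul_sum, ← Pi.one_def, inter_indicator_one, Pi.mul_apply]
    refine Finset.sum_congr rfl fun j _ => Finset.sum_congr rfl fun k _ => by ring
  simp_rw [hexpand]
  rw [integral_finsetSum _ fun j _ => integrable_finsetSum _ fun k _ => (hint j k).const_mul _]
  refine Finset.sum_congr rfl fun j _ => ?_
  rw [integral_finsetSum _ fun k _ => (hint j k).const_mul _]
  refine Finset.sum_congr rfl fun k _ => ?_
  rw [integral_const_mul, ← Pi.one_def, integral_indicator_one ((hA j).inter (hA k))]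

lemma toReal_eLpNorm_two_sum_mul_indicator (hA : ∀ j, MeasurableSet (A j))
    (hfin : ∀ j, μ (A j) ≠ ∞) (c : ι → ℝ) :
    (eLpNorm (fun x => ∑ j, c j * (A j).indicator (fun _ => (1 : ℝ)) x) 2 μ).toReal =
      √(∑ j, ∑ k, c j * c k * μ.real (A j ∩ A k)) := by
  rw [(memLp_sum_mul_indicator hA hfin c 2).eLpNorm_eq_integral_rpow_norm two_ne_zero
    ENNReal.ofNat_ne_top, ENNReal.toReal_ofReal (by positivity),
    ← integral_sq_sum_mul_indicator hA hfin c, Real.sqrt_eq_rpow]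
  simp

end GramFormula

lemma sum_measureReal_inter_le_of_pairwiseDisjoint {α ι : Type*} [MeasurableSpace α]
    {μ : Measure α} {B : Set α} (hB : μ B ≠ ∞) {s : Finset ι} {A : ι → Set α}
    (hA : ∀ k ∈ s, MeasurableSet (A k)) (hd : (s : Set ι).PairwiseDisjoint A) :
    ∑ k ∈ s, μ.real (B ∩ A k) ≤ μ.real B := by
  have : IsFiniteMeasure (μ.restrict B) := isFiniteMeasure_restrict.2 hB
  calc ∑ k ∈ s, μ.real (B ∩ A k) = ∑ k ∈ s, (μ.restrict B).real (A k) :=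
        Finset.sum_congr rfl fun k hk => by rw [measureReal_restrict_apply (hA k hk), inter_comm]
    _ ≤ (μ.restrict B).real univ := sum_measureReal_le_measureReal_univ hA hd
    _ = μ.real B := measureReal_restrict_apply_univ B

section ScaleFamily

variable {α ι : Type*} [MeasurableSpace α] {μ : Measure α} {A : ι → Set α} {m : ι → ℤ}

lemma measure_ne_top_of_measureReal_eq_zpow (hvol : ∀ j, μ.real (A j) = 2 ^ (-m j)) (j : ι) :
    μ (A j) ≠ ∞ := by
  refine fun h => (zpow_pos two_pos (-m j) : (0 : ℝ) < _).ne' ?_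
  rw [← hvol j, measureReal_def, h, ENNReal.toReal_top]

lemma measureReal_inter_sq_mul_le (hvol : ∀ j, μ.real (A j) = 2 ^ (-m j)) (j k : ι) :
    μ.real (A j ∩ A k) ^ 2 * 2 ^ |m j - m k| ≤ μ.real (A j) * μ.real (A k) := by
  wlog h : m j ≤ m k generalizing j k
  · simpa only [inter_comm, abs_sub_comm, mul_comm] using this k j (le_of_not_ge h)
  have hle : μ.real (A j ∩ A k) ≤ 2 ^ (-m k) :=
    hvol k ▸ measureReal_mono inter_subset_right (measure_ne_top_of_measureReal_eq_zpow hvol k)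
  calc μ.real (A j ∩ A k) ^ 2 * 2 ^ |m j - m k| ≤ (2 ^ (-m k)) ^ 2 * 2 ^ (m k - m j) := by
        rw [abs_sub_comm, abs_of_nonneg (sub_nonneg.2 h)]
        gcongr
    _ = μ.real (A j) * μ.real (A k) := by
        rw [hvol, hvol, ← zpow_natCast, ← zpow_mul, ← zpow_add₀ two_ne_zero,
          ← zpow_add₀ two_ne_zero]
        ring_nf

lemma two_mul_mul_measureReal_inter_le (hvol : ∀ j, μ.real (A j) = 2 ^ (-m j)) (c : ι → ℝ)
    {n L : ℕ} (hL : n ^ 2 ≤ 2 ^ L) {j k : ι} (hjk : L ≤ |m j - m k|) :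
    2 * n * (c j * c k * μ.real (A j ∩ A k)) ≤
      c j ^ 2 * μ.real (A j) + c k ^ 2 * μ.real (A k) := by
  set x := n * (c j * c k * μ.real (A j ∩ A k))
  have hsq : x ^ 2 ≤ (c j ^ 2 * μ.real (A j)) * (c k ^ 2 * μ.real (A k)) := by
    have h2L : (n : ℝ) ^ 2 ≤ 2 ^ |m j - m k| :=
      calc (n : ℝ) ^ 2 ≤ 2 ^ L := by exact_mod_cast hL
        _ = 2 ^ (L : ℤ) := (zpow_natCast 2 L).symm
        _ ≤ 2 ^ |m j - m k| := zpow_le_zpow_right₀ one_le_two hjk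
    calc x ^ 2 = (c j * c k) ^ 2 * (μ.real (A j ∩ A k) ^ 2 * n ^ 2) := by ring
      _ ≤ (c j * c k) ^ 2 * (μ.real (A j ∩ A k) ^ 2 * 2 ^ |m j - m k|) := by gcongr
      _ ≤ (c j * c k) ^ 2 * (μ.real (A j) * μ.real (A k)) :=
        mul_le_mul_of_nonneg_left (measureReal_inter_sq_mul_le hvol j k) (sq_nonneg _)
      _ = _ := by ring
  have ha : 0 ≤ c j ^ 2 * μ.real (A j) := by positivity
  have hb : 0 ≤ c k ^ 2 * μ.real (A k) := by positivity
  nlinarith [sq_nonneg (c j ^ 2 * μ.real (A j) - c k ^ 2 * μ.real (A k))]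

lemma sum_measureReal_inter_of_abs_sub_lt_le (hA : ∀ j, MeasurableSet (A j))
    (hvol : ∀ j, μ.real (A j) = 2 ^ (-m j))
    (hdisj : ∀ j k, j ≠ k → m j = m k → Disjoint (A j) (A k)) [Fintype ι] (j : ι) (L : ℕ) :
    ∑ k with |m j - m k| < L, μ.real (A j ∩ A k) ≤ 2 * L * μ.real (A j) := by
  have hmaps : ∀ k ∈ ({k | |m j - m k| < L} : Finset ι), m k ∈ Finset.Ioo (m j - L) (m j + L) :=
    fun k hk => by
      simp only [Finset.mem_filter, Finset.mem_univ, true_and] at hk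
      rw [Finset.mem_Ioo]; constructor <;> linarith [abs_lt.1 hk]
  rw [← Finset.sum_fiberwise_of_maps_to hmaps]
  calc _ ≤ ∑ _s ∈ Finset.Ioo (m j - L) (m j + L), μ.real (A j) := by
        refine Finset.sum_le_sum fun s _ => sum_measureReal_inter_le_of_pairwiseDisjoint
          (measure_ne_top_of_measureReal_eq_zpow hvol j) (fun k _ => hA k) fun k hk l hl hkl => ?_
        simp only [Finset.coe_filter] at hk hl
        exact hdisj k l hkl (hk.2.trans hl.2.symm)
    _ ≤ 2 * L * μ.real (A j) := by
        rw [Finset.sum_const, Int.card_Ioo, nsmul_eq_mul]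
        gcongr
        have : ((m j + L - (m j - L) - 1).toNat : ℤ) ≤ 2 * L := by omega
        exact_mod_cast this

theorem sum_mul_measureReal_inter_le (hA : ∀ j, MeasurableSet (A j))
    (hvol : ∀ j, μ.real (A j) = 2 ^ (-m j))
    (hdisj : ∀ j k, j ≠ k → m j = m k → Disjoint (A j) (A k)) [Fintype ι] (c : ι → ℝ)
    {L : ℕ} (hL : Fintype.card ι ^ 2 ≤ 2 ^ L) :
    ∑ j, ∑ k, c j * c k * μ.real (A j ∩ A k) ≤
      (2 * L + 1) * ∑ j, c j ^ 2 * μ.real (A j) := by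
  set n := Fintype.card ι
  set a : ι → ℝ := fun j => c j ^ 2 * μ.real (A j)
  set near : ι → ι → ℝ := fun j k =>
    if |m j - m k| < L then c j ^ 2 * μ.real (A j ∩ A k) else 0
  have hpair : ∀ j k, c j * c k * μ.real (A j ∩ A k) ≤
      (near j k + near k j) / 2 + (a j + a k) / (2 * n) := by
    intro j k
    have hn : (0 : ℝ) < n := Nat.cast_pos.2 (Fintype.card_pos_iff.2 ⟨j⟩)
    have hfar_nonneg : 0 ≤ (a j + a k) / (2 * n) := by positivity
    by_cases hjk : |m j - m k| < L
    · have hkj : |m k - m j| < L := abs_sub_comm (m j) (m k) ▸ hjk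
      simp only [near, if_pos hjk, if_pos hkj, inter_comm (A k)]
      have : c j * c k ≤ (c j ^ 2 + c k ^ 2) / 2 := by nlinarith [sq_nonneg (c j - c k)]
      nlinarith [measureReal_nonneg (μ := μ) (s := A j ∩ A k)]
    · have hkj : ¬ |m k - m j| < L := abs_sub_comm (m j) (m k) ▸ hjk
      simp only [near, if_neg hjk, if_neg hkj, add_zero, zero_div, zero_add]
      rw [le_div_iff₀ (by positivity), mul_comm]
      exact two_mul_mul_measureReal_inter_le hvol c hL (not_lt.1 hjk)
  have hnear : ∑ j, ∑ k, near j k ≤ 2 * L * ∑ j, a j := by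
    rw [Finset.mul_sum]
    refine Finset.sum_le_sum fun j _ => ?_
    rw [← Finset.sum_filter, ← Finset.mul_sum]
    calc c j ^ 2 * ∑ k with |m j - m k| < L, μ.real (A j ∩ A k)
        ≤ c j ^ 2 * (2 * L * μ.real (A j)) :=
          mul_le_mul_of_nonneg_left
            (sum_measureReal_inter_of_abs_sub_lt_le hA hvol hdisj j L) (sq_nonneg _)
      _ = 2 * L * a j := by ring
  have hsymm : ∑ j, ∑ k, (near j k + near k j) / 2 = ∑ j, ∑ k, near j k := by
    simp only [add_div, Finset.sum_add_distrib]
    rw [Finset.sum_comm (f := fun j k => near k j / 2), ← two_mul]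
    simp only [← Finset.sum_div]
    ring
  have hfar : ∑ j : ι, ∑ k : ι, (a j + a k) / (2 * n) = ∑ j, a j := by
    rcases isEmpty_or_nonempty ι with hι | hι
    · simp
    have hn : (n : ℝ) ≠ 0 := Nat.cast_ne_zero.2 Fintype.card_ne_zero
    simp only [← Finset.sum_div, Finset.sum_add_distrib, Finset.sum_const, Finset.card_univ,
      nsmul_eq_mul]
    rw [← Finset.mul_sum]
    field_simp
    ring
  calc ∑ j, ∑ k, c j * c k * μ.real (A j ∩ A k)
      ≤ ∑ j, ∑ k, ((near j k + near k j) / 2 + (a j + a k) / (2 * n)) :=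
        Finset.sum_le_sum fun j _ => Finset.sum_le_sum fun k _ => hpair j k
    _ = ∑ j, ∑ k, near j k + ∑ j, a j := by
        rw [← hsymm, ← hfar, ← Finset.sum_add_distrib]
        simp only [Finset.sum_add_distrib]
    _ ≤ (2 * L + 1) * ∑ j, a j := by linarith

end ScaleFamily

lemma measurableSet_dyadicI (m j : ℤ) : MeasurableSet (dyadicI m j) := measurableSet_Ico

lemma volume_real_dyadicI (m j : ℤ) : volume.real (dyadicI m j) = 2 ^ (-m) := by
  rw [dyadicI, Real.volume_real_Ico_of_le (by gcongr; linarith), ← sub_div, zpow_neg]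
  ring

lemma disjoint_dyadicI {m j j' : ℤ} (h : j ≠ j') : Disjoint (dyadicI m j) (dyadicI m j') := by
  wlog hlt : j < j' generalizing j j'
  · exact (this h.symm (lt_of_le_of_ne (not_lt.1 hlt) h.symm)).symm
  refine Ico_disjoint_Ico.2 (le_trans (min_le_left _ _) (le_trans ?_ (le_max_right _ _)))
  gcongr
  exact le_sub_iff_add_le.2 (by exact_mod_cast hlt)

lemma four_mul_natLog_add_five_le_log {N : ℕ} (hN : 2 ≤ N) :
    4 * (Nat.log 2 N : ℝ) + 5 ≤ 16 * Real.log N := by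
  have hℓ : (1 : ℝ) ≤ Nat.log 2 N := by exact_mod_cast Nat.log_pos one_lt_two hN
  have hlog2 : (9 : ℝ) / 16 < Real.log 2 := by linarith [Real.log_two_gt_d9]
  have hℓlog : (Nat.log 2 N : ℝ) * Real.log 2 ≤ Real.log N := by
    rw [← Real.log_pow]
    exact Real.log_le_log (by positivity) (by exact_mod_cast Nat.pow_log_le_self 2 (by omega))
  nlinarith

/-- There is an absolute constant `C > 0` such that for any `N ≥ 2` pairwise distinct
dyadic intervals and positive coefficients `c_j`,
`‖∑ c_j 𝟙_{Δ_j}‖₂ ≤ C √(log N) (∑ c_j² |Δ_j|)^{1/2}`. -/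
theorem stmt_2 : ∃ C > (0 : ℝ), ∀ (N : ℕ), 2 ≤ N →
    ∀ ι : Fin N → ℤ × ℤ, Function.Injective ι →
    ∀ c : Fin N → ℝ, (∀ j, 0 < c j) →
    (eLpNorm (fun x => ∑ j, c j * (dyadicI (ι j).1 (ι j).2).indicator
        (fun _ => (1 : ℝ)) x) 2 volume).toReal ≤
      C * Real.sqrt (Real.log N) *
        Real.sqrt (∑ j, (c j) ^ 2 * (volume (dyadicI (ι j).1 (ι j).2)).toReal) := by
  refine ⟨4, by norm_num, fun N hN ι hι c _ => ?_⟩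
  set A : Fin N → Set ℝ := fun j => dyadicI (ι j).1 (ι j).2
  have hA : ∀ j, MeasurableSet (A j) := fun j => measurableSet_dyadicI _ _
  have hvol : ∀ j, volume.real (A j) = 2 ^ (-(ι j).1) := fun j => volume_real_dyadicI _ _
  have hdisj : ∀ j k, j ≠ k → (ι j).1 = (ι k).1 → Disjoint (A j) (A k) := fun j k hjk h => by
    simp only [A, h]
    exact disjoint_dyadicI fun h' => hjk (hι (Prod.ext h h'))
  have hL : Fintype.card (Fin N) ^ 2 ≤ 2 ^ (2 * (Nat.log 2 N + 1)) := by
    rw [Fintype.card_fin, pow_mul']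
    exact Nat.pow_le_pow_left (Nat.lt_pow_succ_log_self one_lt_two N).le 2
  have hgram := sum_mul_measureReal_inter_le hA hvol hdisj c hL
  have hB : 0 ≤ ∑ j, c j ^ 2 * volume.real (A j) := by positivity
  have hlog_nonneg : 0 ≤ Real.log N := Real.log_nonneg (by exact_mod_cast (by omega : 1 ≤ N))
  have hlog : (2 * ((2 * (Nat.log 2 N + 1) : ℕ) : ℝ) + 1) ≤ 16 * Real.log N := by
    push_cast
    linarith [four_mul_natLog_add_five_le_log hN]
  rw [toReal_eLpNorm_two_sum_mul_indicator hA (measure_ne_top_of_measureReal_eq_zpow hvol) c]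
  calc √(∑ j, ∑ k, c j * c k * volume.real (A j ∩ A k))
      ≤ √(16 * Real.log N * ∑ j, c j ^ 2 * volume.real (A j)) :=
        Real.sqrt_le_sqrt (hgram.trans (mul_le_mul_of_nonneg_right hlog hB))
    _ = 4 * √(Real.log N) * √(∑ j, c j ^ 2 * volume.real (A j)) := by
        have h16 : √(16 : ℝ) = 4 := by
          rw [show (16 : ℝ) = 4 ^ 2 by norm_num, Real.sqrt_sq (by norm_num)]
        rw [Real.sqrt_mul' _ hB, Real.sqrt_mul' _ hlog_nonneg, h16]
end

section
/- Let ξ(x) = (1+|x|)^{-(1+β)} for some 0 < β ≤ 1, and set ξ_{n,j}(x) = 2^{n/2} ξ(2^n x - j) for n, j ∈ ℤ. Then there is a constant C (depending only on β) such that for every a > 0 and every n ∈ ℤ one has ∑_{j ∈ ℤ} (∫_{-a}^{a} ξ_{n,j}(t) dt)² ≤ C · a. -/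
open MeasureTheory Set

/-!
Write `I_j = ∫_{-a}^a ξ_{n,j}`. Substituting `x = 2ⁿ t - j` gives `I_j ≤ 2^{-n/2} ‖ξ‖₁`, while
`∑_j I_j = 2^{n/2} ∫_{-a}^a ∑_j ξ(2ⁿ t - j) dt ≤ 2^{n/2} · 2a · S`, where `S` bounds the
periodization `∑_j ξ(x - j)` uniformly in `x`; one may take `S = 2^{1+β} ∑_j ξ(j)`, since
`ξ(x - j) ≤ 2^{1+β} ξ(⌊x⌋ - j)`. Hence `∑_j I_j² ≤ (max_j I_j) ∑_j I_j ≤ 2 ‖ξ‖₁ S a`.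
-/

noncomputable section

def polyDecay (p x : ℝ) : ℝ := (1 + |x|) ^ (-p)

namespace polyDecay

variable {p : ℝ}

lemma nonneg (p x : ℝ) : 0 ≤ polyDecay p x := Real.rpow_nonneg (by positivity) _

lemma pos (p x : ℝ) : 0 < polyDecay p x := Real.rpow_pos_of_pos (by positivity) _

lemma continuous (p : ℝ) : Continuous (polyDecay p) :=
  (continuous_const.add continuous_abs).rpow_const fun x => Or.inl (by positivity : (0 : ℝ) < 1 + |x|).ne'

lemma integrable (hp : 1 < p) : Integrable (polyDecay p) := by
  unfold polyDecay
  simpa [polyDecay, Real.norm_eq_abs] using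
    integrable_one_add_norm (E := ℝ) (μ := volume) (r := p) (by simpa using hp)

lemma summable_int (hp : 1 < p) : Summable fun j : ℤ => polyDecay p j := by
  have hnat : Summable fun m : ℕ => polyDecay p m := by
    refine ((summable_nat_add_iff 1).2 (Real.summable_nat_rpow.2 (neg_lt_neg hp))).congr
      fun m => ?_
    simp [polyDecay, add_comm]
  exact .of_nat_of_neg (by simpa using hnat) (by simpa [polyDecay] using hnat)

lemma le_two_rpow_mul (hp : 0 ≤ p) {x y : ℝ} (hxy : |x - y| ≤ 1) :
    polyDecay p x ≤ 2 ^ p * polyDecay p y := by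
  have hy : (1 + |y|) / 2 ≤ 1 + |x| := by
    have := abs_sub_abs_le_abs_sub y x
    rw [abs_sub_comm] at this
    linarith [abs_nonneg x]
  calc polyDecay p x ≤ ((1 + |y|) / 2) ^ (-p) :=
        Real.rpow_le_rpow_of_nonpos (by positivity) hy (neg_nonpos.2 hp)
    _ = 2 ^ p * polyDecay p y := by
        rw [Real.div_rpow (by positivity) zero_le_two, Real.rpow_neg zero_le_two, polyDecay]
        field_simp

end polyDecay

lemma sum_comp_sub_int_le {f : ℝ → ℝ} (hf0 : ∀ x, 0 ≤ f x) (hsum : Summable fun j : ℤ => f j)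
    {c : ℝ} (hc : 0 ≤ c) (hf : ∀ x y, |x - y| ≤ 1 → f x ≤ c * f y) (x : ℝ) (F : Finset ℤ) :
    ∑ j ∈ F, f (x - j) ≤ c * ∑' j : ℤ, f j := by
  set m : ℤ := ⌊x⌋
  have hshift : Summable fun j : ℤ => f ((m - j : ℤ) : ℝ) :=
    (Equiv.subLeft m).summable_iff.2 hsum
  calc ∑ j ∈ F, f (x - j) ≤ ∑ j ∈ F, c * f ((m - j : ℤ) : ℝ) := by
        refine Finset.sum_le_sum fun j _ => hf _ _ ?_
        rw [Int.cast_sub, sub_sub_sub_cancel_right, Int.self_sub_floor, abs_of_nonneg (Int.fract_nonneg x)]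
        exact (Int.fract_lt_one x).le
    _ = c * ∑ j ∈ F, f ((m - j : ℤ) : ℝ) := (Finset.mul_sum ..).symm
    _ ≤ c * ∑' j : ℤ, f ((m - j : ℤ) : ℝ) :=
        mul_le_mul_of_nonneg_left (hshift.sum_le_tsum F fun j _ => hf0 _) hc
    _ = c * ∑' j : ℤ, f j := by
        rw [← (Equiv.subLeft m).tsum_eq (fun j : ℤ => f j)]
        rfl

lemma intervalIntegral_comp_mul_sub_le_integral {f : ℝ → ℝ} (hf0 : ∀ x, 0 ≤ f x)
    (hf : Integrable f) {c : ℝ} (hc : 0 < c) {u v : ℝ} (huv : u ≤ v) (d : ℝ) :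
    ∫ t in u..v, f (c * t - d) ≤ c⁻¹ * ∫ x, f x := by
  rw [intervalIntegral.integral_comp_mul_sub f hc.ne', smul_eq_mul,
    intervalIntegral.integral_of_le (by nlinarith)]
  exact mul_le_mul_of_nonneg_left
    (setIntegral_le_integral hf (.of_forall hf0)) (inv_nonneg.2 hc.le)

lemma tsum_sq_intervalIntegral_dilate_le {f : ℝ → ℝ} (hf0 : ∀ x, 0 ≤ f x)
    (hfc : Continuous f) (hf : Integrable f) {S : ℝ} (hS : ∀ x (F : Finset ℤ), ∑ j ∈ F, f (x - j) ≤ S)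
    {s : ℝ} (hs : 0 < s) {a : ℝ} (ha : 0 ≤ a) :
    ∑' j : ℤ, (∫ t in (-a)..a, s * f (s ^ 2 * t - j)) ^ 2 ≤ 2 * (∫ x, f x) * S * a := by
  set K := ∫ x, f x
  set I : ℤ → ℝ := fun j => ∫ t in (-a)..a, s * f (s ^ 2 * t - j)
  have hcont (j : ℤ) : Continuous fun t => s * f (s ^ 2 * t - j) := by fun_prop
  have hI0 (j : ℤ) : 0 ≤ I j :=
    intervalIntegral.integral_nonneg (by linarith) fun t _ => mul_nonneg hs.le (hf0 _)
  have hImax (j : ℤ) : I j ≤ s⁻¹ * K := by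
    calc I j = s * ∫ t in (-a)..a, f (s ^ 2 * t - j) := intervalIntegral.integral_const_mul ..
      _ ≤ s * ((s ^ 2)⁻¹ * K) := mul_le_mul_of_nonneg_left
          (intervalIntegral_comp_mul_sub_le_integral hf0 hf (by positivity) (by linarith) _) hs.le
      _ = s⁻¹ * K := by field_simp
  have hIsum (F : Finset ℤ) : ∑ j ∈ F, I j ≤ 2 * a * s * S := by
    calc ∑ j ∈ F, I j = ∫ t in (-a)..a, s * ∑ j ∈ F, f (s ^ 2 * t - j) := by
          rw [← intervalIntegral.integral_finsetSum fun j _ => (hcont j).intervalIntegrable _ _]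
          simp only [Finset.mul_sum]
      _ ≤ ∫ _ in (-a)..a, s * S :=
          intervalIntegral.integral_mono_on (by linarith)
            ((by fun_prop : Continuous _).intervalIntegrable _ _) intervalIntegrable_const
            fun t _ => mul_le_mul_of_nonneg_left (hS _ F) hs.le
      _ = 2 * a * s * S := by simp only [intervalIntegral.integral_const, smul_eq_mul]; ring
  have hK0 : 0 ≤ K := integral_nonneg hf0
  have hS0 : 0 ≤ S := by simpa using hS 0 ∅
  refine tsum_le_of_sum_le' (by positivity) fun F => ?_
  calc ∑ j ∈ F, I j ^ 2 ≤ ∑ j ∈ F, s⁻¹ * K * I j :=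
        Finset.sum_le_sum fun j _ => by
          rw [sq]; exact mul_le_mul_of_nonneg_right (hImax j) (hI0 j)
    _ = s⁻¹ * K * ∑ j ∈ F, I j := (Finset.mul_sum ..).symm
    _ ≤ s⁻¹ * K * (2 * a * s * S) := mul_le_mul_of_nonneg_left (hIsum F) (by positivity)
    _ = 2 * K * S * a := by field_simp

end

theorem stmt_5_general (β : ℝ) (hβ : 0 < β) :
    ∃ C > (0 : ℝ), ∀ a > (0 : ℝ), ∀ n : ℤ,
      ∑' j : ℤ,
        (∫ t in (-a)..a,
          (2 : ℝ) ^ ((n : ℝ) / 2) * (1 + |(2 : ℝ) ^ n * t - (j : ℝ)|) ^ (-(1 + β))) ^ 2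
        ≤ C * a := by
  have hp : 1 < 1 + β := by linarith
  have hint := polyDecay.integrable hp
  have hsum := polyDecay.summable_int hp
  have hK : 0 < ∫ x, polyDecay (1 + β) x :=
    integral_pos_of_integrable_nonneg_nonzero (x := 0) (polyDecay.continuous _) hint
      (polyDecay.nonneg _) (polyDecay.pos _ _).ne'
  have hZ : 0 < ∑' j : ℤ, polyDecay (1 + β) j :=
    hsum.tsum_pos (fun j => polyDecay.nonneg _ _) 0 (polyDecay.pos _ _)
  refine ⟨2 * (∫ x, polyDecay (1 + β) x) * (2 ^ (1 + β) * ∑' j : ℤ, polyDecay (1 + β) j),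
    by positivity, fun a ha n => ?_⟩
  have hs : ((2 : ℝ) ^ ((n : ℝ) / 2)) ^ 2 = 2 ^ n := by
    rw [← Real.rpow_natCast, ← Real.rpow_mul zero_le_two, ← Real.rpow_intCast]
    push_cast; ring_nf
  simpa only [polyDecay, hs] using tsum_sq_intervalIntegral_dilate_le (polyDecay.nonneg _)
    (polyDecay.continuous _) hint
    (sum_comp_sub_int_le (polyDecay.nonneg _) hsum (by positivity)
      fun _ _ => polyDecay.le_two_rpow_mul (by positivity))
    (by positivity : (0 : ℝ) < 2 ^ ((n : ℝ) / 2)) ha.le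

/-- For `ξ(x) = (1+|x|)^{-(1+β)}` and `ξ_{n,j}(x) = 2^{n/2} ξ(2^n x - j)`, there is a
constant `C` (depending only on `β`) with `∑_j (∫_{-a}^a ξ_{n,j})² ≤ C a` for all
`a > 0` and `n ∈ ℤ`. -/
theorem stmt_5 (β : ℝ) (hβ : 0 < β) (hβ1 : β ≤ 1) :
    ∃ C > (0 : ℝ), ∀ a > (0 : ℝ), ∀ n : ℤ,
      ∑' j : ℤ,
        (∫ t in (-a)..a,
          (2 : ℝ) ^ ((n : ℝ) / 2) * (1 + |(2 : ℝ) ^ n * t - (j : ℝ)|) ^ (-(1 + β))) ^ 2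
        ≤ C * a :=
  stmt_5_general β hβ
end

section
/- Let ξ(x) = (1+|x|)^{-(1+β)} with 0 < β ≤ 1 and ξ_{n,j}(x) = 2^{n/2} ξ(2^n x - j). Suppose w : ℤ → (0, ∞) is a sequence with ∑_{n ∈ ℤ} 1/w(n) < ∞. If coefficients a_{n,j} (n, j ∈ ℤ) satisfy ∑_{n,j ∈ ℤ} a_{n,j}² w(n) < ∞, then ∑_{n,j ∈ ℤ} |a_{n,j}| ξ_{n,j}(x) < ∞ for almost every x ∈ ℝ. -/
/-!
Write `ξ n j x = 2^(n/2) φ (2ⁿ x - j)` with `φ y = (1 + |y|)^(-(1+β))`. It suffices that the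
series has finite integral over every set `s` of finite measure. Put `I n j = ∫_s ξ n j`. The
change of variables `y = 2ⁿ x - j` gives `I n j ≤ 2^(-n/2) ‖φ‖₁`, and the lattice sums
`∑ j, φ (t - j)` are bounded by some `K` uniformly in `t`, so `∑ j, I n j ≤ 2^(n/2) K |s|`. Hence
`∑ j, (I n j)² ≤ ‖φ‖₁ K |s|` for every level `n`, and the weighted AM-GM inequality
`|a| I ≤ a² w + I² / w` bounds `∑ n j, |a n j| I n j` by `∑ a² w + ‖φ‖₁ K |s| ∑ 1 / w`.
-/

open MeasureTheory Filter
open scoped ENNReal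

namespace ENNReal

theorem mul_le_sq_mul_add_sq_div (x y W : ℝ≥0∞) : x * y ≤ x ^ 2 * W + y ^ 2 / W := by
  rcases le_total y (x * W) with h | h
  · calc x * y ≤ x * (x * W) := by gcongr
      _ = x ^ 2 * W := by ring
      _ ≤ _ := le_self_add
  · rcases eq_or_ne y 0 with rfl | hy
    · simp
    rcases eq_or_ne W ⊤ with rfl | hW
    · rcases eq_or_ne x 0 with rfl | hx <;> simp [*]
    calc x * y ≤ y / W * y := by gcongr; exact (ENNReal.le_div_iff_mul_le (.inr hy) (.inl hW)).2 h
      _ = y ^ 2 / W := by rw [sq, mul_comm, mul_div_assoc]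
      _ ≤ _ := le_add_self

theorem tsum_mul_ne_top_of_sq_weighted {ι κ : Type*} {a b : ι × κ → ℝ≥0∞} {w : ι → ℝ≥0∞}
    {M : ℝ≥0∞} (ha : ∑' p, a p ^ 2 * w p.1 ≠ ∞) (hw : ∑' i, (w i)⁻¹ ≠ ∞)
    (hb : ∀ i, ∑' k, b (i, k) ^ 2 ≤ M) (hM : M ≠ ∞) : ∑' p, a p * b p ≠ ∞ := by
  have hb_weighted : ∑' p, b p ^ 2 / w p.1 ≤ M * ∑' i, (w i)⁻¹ := by
    rw [ENNReal.tsum_prod', ← ENNReal.tsum_mul_left]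
    gcongr with i
    simp only [div_eq_mul_inv, ENNReal.tsum_mul_right]
    gcongr
    exact hb i
  refine ne_top_of_le_ne_top ?_
    (ENNReal.tsum_le_tsum fun p ↦ mul_le_sq_mul_add_sq_div (a p) (b p) (w p.1))
  rw [ENNReal.tsum_add]
  exact add_ne_top.2 ⟨ha, ne_top_of_le_ne_top (mul_ne_top hM hw) hb_weighted⟩

end ENNReal

theorem lintegral_comp_mul_sub (f : ℝ → ℝ≥0∞) {c : ℝ} (hc : c ≠ 0) (d : ℝ) :
    ∫⁻ x, f (c * x - d) = ENNReal.ofReal |c⁻¹| * ∫⁻ y, f y := by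
  rw [← (measurableEmbedding_mulLeft₀ hc).lintegral_map (fun y ↦ f (y - d)),
    Real.map_volume_mul_left hc, lintegral_smul_measure, lintegral_sub_right_eq_self]
  rfl

section Dilates

variable {φ : ℝ → ℝ≥0∞}

theorem tsum_sq_setLIntegral_comp_mul_sub_le (hφ : Measurable φ) {K : ℝ≥0∞}
    (hK : ∀ t, ∑' j : ℤ, φ (t - j) ≤ K) (s : Set ℝ) {c : ℝ} (hc : 0 < c) :
    ∑' j : ℤ, (∫⁻ x in s, φ (c * x - j)) ^ 2 ≤
      ENNReal.ofReal c⁻¹ * ((∫⁻ y, φ y) * (K * volume s)) := by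
  have h_entry (j : ℤ) : ∫⁻ x in s, φ (c * x - j) ≤ ENNReal.ofReal c⁻¹ * ∫⁻ y, φ y := by
    calc ∫⁻ x in s, φ (c * x - j) ≤ ∫⁻ x, φ (c * x - j) := setLIntegral_le_lintegral _ _
      _ = _ := by rw [lintegral_comp_mul_sub φ hc.ne', abs_of_pos (inv_pos.2 hc)]
  have h_row : ∑' j : ℤ, ∫⁻ x in s, φ (c * x - j) ≤ K * volume s := by
    rw [← lintegral_tsum fun j ↦ by fun_prop, ← setLIntegral_const]
    exact lintegral_mono fun x ↦ hK (c * x)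
  calc ∑' j : ℤ, (∫⁻ x in s, φ (c * x - j)) ^ 2
      ≤ ∑' j : ℤ, ENNReal.ofReal c⁻¹ * (∫⁻ y, φ y) * ∫⁻ x in s, φ (c * x - j) := by
        gcongr with j
        rw [sq]
        gcongr
        exact h_entry j
    _ ≤ _ := by
        rw [ENNReal.tsum_mul_left, mul_assoc]
        gcongr

theorem ae_tsum_mul_sqrt_dilate_ne_top {ι : Type*} [Countable ι] (hφ : Measurable φ)
    (hφ_int : ∫⁻ y, φ y ≠ ∞) {K : ℝ≥0∞} (hK_ne_top : K ≠ ∞) (hK : ∀ t, ∑' j : ℤ, φ (t - j) ≤ K)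
    {c : ι → ℝ} (hc : ∀ i, 0 < c i) {w : ι → ℝ≥0∞} (hw : ∑' i, (w i)⁻¹ ≠ ∞)
    {a : ι × ℤ → ℝ≥0∞} (ha : ∑' p, a p ^ 2 * w p.1 ≠ ∞) :
    ∀ᵐ x, ∑' p : ι × ℤ, a p * (ENNReal.ofReal √(c p.1) * φ (c p.1 * x - p.2)) ≠ ∞ := by
  refine ae_of_forall_measure_lt_top_ae_restrict _ fun s _ hs ↦ ?_
  have h_int :
      ∫⁻ x in s, ∑' p : ι × ℤ, a p * (ENNReal.ofReal √(c p.1) * φ (c p.1 * x - p.2)) ≠ ∞ := by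
    rw [lintegral_tsum fun p ↦ by fun_prop]
    have h_const_mul (p : ι × ℤ) :
        ∫⁻ x in s, a p * (ENNReal.ofReal √(c p.1) * φ (c p.1 * x - p.2)) =
          a p * (ENNReal.ofReal √(c p.1) * ∫⁻ x in s, φ (c p.1 * x - p.2)) := by
      rw [lintegral_const_mul _ (by fun_prop), lintegral_const_mul _ (by fun_prop)]
    simp only [h_const_mul]
    refine ENNReal.tsum_mul_ne_top_of_sq_weighted ha hw (fun i ↦ ?_)
      (ENNReal.mul_ne_top hφ_int (ENNReal.mul_ne_top hK_ne_top hs.ne))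
    calc ∑' j : ℤ, (ENNReal.ofReal √(c i) * ∫⁻ x in s, φ (c i * x - j)) ^ 2
        = ENNReal.ofReal (c i) * ∑' j : ℤ, (∫⁻ x in s, φ (c i * x - j)) ^ 2 := by
          simp only [mul_pow, ENNReal.tsum_mul_left, ← ENNReal.ofReal_pow (Real.sqrt_nonneg _),
            Real.sq_sqrt (hc i).le]
      _ ≤ ENNReal.ofReal (c i) * (ENNReal.ofReal (c i)⁻¹ * ((∫⁻ y, φ y) * (K * volume s))) := by
          gcongr
          exact tsum_sq_setLIntegral_comp_mul_sub_le hφ hK s (hc i)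
      _ = (∫⁻ y, φ y) * (K * volume s) := by
          rw [← mul_assoc, ← ENNReal.ofReal_mul (hc i).le, mul_inv_cancel₀ (hc i).ne',
            ENNReal.ofReal_one, one_mul]
  filter_upwards [ae_lt_top (by fun_prop) h_int] with x hx using hx.ne

end Dilates

theorem lintegral_one_add_abs_rpow_neg_ne_top {r : ℝ} (hr : 1 < r) :
    ∫⁻ y : ℝ, ENNReal.ofReal ((1 + |y|) ^ (-r)) ≠ ∞ := by
  simpa using (finite_integral_one_add_norm (E := ℝ) (μ := volume) (by simpa using hr)).ne

theorem summable_max_one_abs_intCast_rpow_neg {r : ℝ} (hr : 1 < r) :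
    Summable fun i : ℤ ↦ max 1 |(i : ℝ)| ^ (-r) := by
  refine (Real.summable_abs_int_rpow hr).congr_cofinite ?_
  filter_upwards [eventually_cofinite_ne 0] with i hi
  rw [max_eq_right (by exact_mod_cast Int.one_le_abs hi)]

theorem tsum_ofReal_one_add_abs_sub_intCast_rpow_neg_le {r : ℝ} (hr : 0 ≤ r) (t : ℝ) :
    ∑' j : ℤ, ENNReal.ofReal ((1 + |t - j|) ^ (-r)) ≤
      ∑' i : ℤ, ENNReal.ofReal (max 1 |(i : ℝ)| ^ (-r)) := by
  -- `max 1 |j - ⌊t⌋| ≤ 1 + |t - j|` because `0 ≤ t - ⌊t⌋ < 1`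
  rw [← (Equiv.subRight ⌊t⌋).tsum_eq fun i : ℤ ↦ ENNReal.ofReal (max 1 |(i : ℝ)| ^ (-r))]
  refine ENNReal.tsum_le_tsum fun j ↦ ENNReal.ofReal_le_ofReal ?_
  refine Real.rpow_le_rpow_of_nonpos (by positivity) (max_le ?_ ?_) (neg_nonpos.2 hr)
  · linarith [abs_nonneg (t - j)]
  · have := Int.floor_le t
    have := Int.lt_floor_add_one t
    simp only [Equiv.subRight_apply, Int.cast_sub]
    rw [abs_le]
    constructor <;> cases abs_cases (t - j) <;> linarith

theorem stmt_6_general (β : ℝ) (hβ : 0 < β)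
    (w : ℤ → ℝ) (hw : ∀ n, 0 < w n) (hws : Summable fun n => 1 / w n)
    (a : ℤ × ℤ → ℝ) (ha : Summable fun p => (a p) ^ 2 * w p.1) :
    ∀ᵐ x : ℝ, Summable fun p : ℤ × ℤ =>
      |a p| * ((2 : ℝ) ^ ((p.1 : ℝ) / 2) * (1 + |(2 : ℝ) ^ p.1 * x - (p.2 : ℝ)|) ^ (-(1 + β))) := by
  have hr : 1 < 1 + β := by linarith
  have hw' : ∑' n, (ENNReal.ofReal (w n))⁻¹ ≠ ∞ := by
    simpa only [one_div, ENNReal.ofReal_inv_of_pos (hw _)] using hws.tsum_ofReal_ne_top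
  have ha' : ∑' p, ENNReal.ofReal |a p| ^ 2 * ENNReal.ofReal (w p.1) ≠ ∞ := by
    simpa only [← ENNReal.ofReal_pow (abs_nonneg _), sq_abs, ← ENNReal.ofReal_mul (sq_nonneg _)]
      using ha.tsum_ofReal_ne_top
  have h_sqrt (n : ℤ) : √((2 : ℝ) ^ n) = (2 : ℝ) ^ ((n : ℝ) / 2) := by
    rw [Real.sqrt_eq_rpow, ← Real.rpow_intCast, ← Real.rpow_mul zero_le_two]
    ring_nf
  filter_upwards [ae_tsum_mul_sqrt_dilate_ne_top (c := fun n : ℤ ↦ (2 : ℝ) ^ n) (by fun_prop)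
    (lintegral_one_add_abs_rpow_neg_ne_top hr)
    (summable_max_one_abs_intCast_rpow_neg hr).tsum_ofReal_ne_top
    (tsum_ofReal_one_add_abs_sub_intCast_rpow_neg_le (by linarith)) (fun n ↦ by positivity) hw' ha']
    with x hx
  refine (ENNReal.summable_toReal hx).congr fun p ↦ ?_
  rw [h_sqrt, ← ENNReal.ofReal_mul (by positivity), ← ENNReal.ofReal_mul (abs_nonneg _),
    ENNReal.toReal_ofReal (by positivity)]

/-- If `∑_n 1/w(n) < ∞` and `∑_{n,j} a_{n,j}² w(n) < ∞`, then the series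
`∑_{n,j} |a_{n,j}| ξ_{n,j}(x)` with `ξ_{n,j}(x) = 2^{n/2}(1+|2^n x - j|)^{-(1+β)}`
converges for almost every `x ∈ ℝ`. -/
theorem stmt_6 (β : ℝ) (hβ : 0 < β) (hβ1 : β ≤ 1)
    (w : ℤ → ℝ) (hw : ∀ n, 0 < w n) (hws : Summable fun n => 1 / w n)
    (a : ℤ × ℤ → ℝ) (ha : Summable fun p => (a p) ^ 2 * w p.1) :
    ∀ᵐ x : ℝ, Summable fun p : ℤ × ℤ =>
      |a p| * ((2 : ℝ) ^ ((p.1 : ℝ) / 2) * (1 + |(2 : ℝ) ^ p.1 * x - (p.2 : ℝ)|) ^ (-(1 + β))) :=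
  stmt_6_general β hβ w hw hws a ha
end

section
/- Let (F_k)_{k≥1} be a sequence of finite partitions of [0,1) into intervals with max_{J ∈ F_k} |J| → 0 as k → ∞, and let (E_k) be measurable subsets of [0,1) such that |E_k ∩ F| > c|F| for every F ∈ F_k, where c > 0 is a fixed constant. If a_k > 0 and ∑_{k≥1} a_k = ∞, then ∑_{k≥1} a_k 𝟙_{E_k}(x) = ∞ for almost every x ∈ [0,1). -/
/-!
Suppose the partial sums of `∑ a_k 𝟙_{E_k}` stay below `M` on a set `D ⊆ [0,1)` of positive
measure. By Lebesgue's density theorem some ball `I = [x - r, x + r]` satisfies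
`|D ∩ I| ≥ (1 - c/4) |I|`. Once the mesh of `F_k` is below `cr/4`, the cells of `F_k` meeting `I`
have total length at most `2r + cr/2`, and `E_k` misses at most the fraction `1 - c` of each of
them, so `|E_k ∩ D ∩ I| ≥ cr`. Integrating the partial sums over `D ∩ I` then gives
`cr ∑_{k ≥ K} a_k ≤ M |D ∩ I|`, contradicting `∑ a_k = ∞`.
-/

open MeasureTheory Set Filter Metric ENNReal

section Density

variable {β : Type*} [MetricSpace β] [MeasurableSpace β] [BorelSpace β]
  [SecondCountableTopology β] [HasBesicovitchCovering β]

theorem exists_closedBall_mul_measure_le_measure_inter (μ : Measure β)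
    [IsLocallyFiniteMeasure μ] {s : Set β} (hs : μ s ≠ 0) {t : ℝ≥0∞} (ht : t < 1) :
    ∃ x, ∃ r > 0, t * μ (closedBall x r) ≤ μ (s ∩ closedBall x r) := by
  have : (ae (μ.restrict s)).NeBot := ae_neBot.mpr (by rwa [Ne, Measure.restrict_eq_zero])
  obtain ⟨x, hx⟩ := (Besicovitch.ae_tendsto_measure_inter_div μ s).exists
  obtain ⟨r, hrt, hr⟩ := ((hx.eventually_const_lt ht).and self_mem_nhdsWithin).exists
  exact ⟨x, r, hr, mul_le_of_le_div hrt.le⟩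

end Density

section Covering

variable {α : Type*} [MeasurableSpace α] (μ : Measure α)

theorem measure_diff_le_of_mul_le_measure_inter {E G : Set α} {t : ℝ≥0∞}
    (hE : NullMeasurableSet E μ) (hG : μ G ≠ ∞) (h : t * μ G ≤ μ (E ∩ G)) :
    μ (G \ E) ≤ (1 - t) * μ G := by
  have hGE : μ (G ∩ E) ≠ ∞ := ne_top_of_le_ne_top hG (measure_mono inter_subset_left)
  calc μ (G \ E) ≤ μ G - μ (G ∩ E) :=
        ENNReal.le_sub_of_add_le_left hGE (measure_inter_add_sdiff₀ G hE).le
    _ ≤ μ G - t * μ G := tsub_le_tsub_left (inter_comm G E ▸ h) _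
    _ = (1 - t) * μ G := by rw [ENNReal.sub_mul fun _ _ => hG, one_mul]

theorem measure_le_measure_inter_add_sum_diff {ι : Type*} (s : Finset ι) (G : ι → Set α)
    {E B : Set α} (hB : B ⊆ ⋃ i ∈ s, G i) :
    μ B ≤ μ (E ∩ B) + ∑ i ∈ s, μ (G i \ E) := by
  have hsub : B ⊆ (E ∩ B) ∪ ⋃ i ∈ s, G i \ E := by
    intro y hy
    by_cases hyE : y ∈ E
    · exact Or.inl ⟨hyE, hy⟩
    · obtain ⟨i, hi, hyi⟩ := mem_iUnion₂.mp (hB hy)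
      exact Or.inr (mem_biUnion hi ⟨hyi, hyE⟩)
  calc μ B ≤ μ ((E ∩ B) ∪ ⋃ i ∈ s, G i \ E) := measure_mono hsub
    _ ≤ μ (E ∩ B) + ∑ i ∈ s, μ (G i \ E) :=
        (measure_union_le _ _).trans (by gcongr; exact measure_biUnion_finset_le _ _)

theorem tsum_mul_measure_inter_le {ι : Type*} [Countable ι] {E : ι → Set α}
    (hE : ∀ k, MeasurableSet (E k)) (b : ι → ℝ≥0∞) {B : Set α} {M : ℝ≥0∞}
    (hB : ∀ x ∈ B, ∑' k, (E k).indicator (fun _ => b k) x ≤ M) :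
    ∑' k, b k * μ (E k ∩ B) ≤ M * μ B := by
  calc ∑' k, b k * μ (E k ∩ B)
      = ∑' k, ∫⁻ x in B, (E k).indicator (fun _ => b k) x ∂μ := by
        simp only [lintegral_indicator_const (hE _), Measure.restrict_apply (hE _)]
    _ = ∫⁻ x in B, ∑' k, (E k).indicator (fun _ => b k) x ∂μ :=
        (lintegral_tsum fun k => (measurable_const.indicator (hE k)).aemeasurable).symm
    _ ≤ ∫⁻ _ in B, M ∂μ := setLIntegral_mono measurable_const hB
    _ = M * μ B := setLIntegral_const B M

theorem ae_eq_top_of_forall_measure_le_natCast_eq_zero {f : α → ℝ≥0∞}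
    (h : ∀ M : ℕ, μ {x | f x ≤ M} = 0) : ∀ᵐ x ∂μ, f x = ∞ := by
  have hgt : ∀ M : ℕ, ∀ᵐ x ∂μ, (M : ℝ≥0∞) < f x := fun M => by
    simpa only [ae_iff, not_lt] using h M
  filter_upwards [ae_all_iff.mpr hgt] with x hx
  exact eq_top_of_forall_nnreal_le fun r =>
    (ENNReal.coe_le_coe.mpr (Nat.le_ceil r)).trans (by exact_mod_cast (hx ⌈r⌉₊).le)

end Covering

theorem not_summable_mul_indicator_of_tsum_indicator_eq_top {α : Type*} {a : ℕ → ℝ}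
    (ha : ∀ k, 0 ≤ a k) {E : ℕ → Set α} {x : α}
    (h : ∑' k, (E k).indicator (fun _ => ENNReal.ofReal (a k)) x = ∞) :
    ¬ Summable fun k => a k * (E k).indicator (fun _ => (1 : ℝ)) x := by
  intro hsum
  have hterm : ∀ k, ENNReal.ofReal (a k * (E k).indicator (fun _ => (1 : ℝ)) x)
      = (E k).indicator (fun _ => ENNReal.ofReal (a k)) x := fun k => by
    by_cases hxk : x ∈ E k <;> simp [hxk]
  have hsum' := ENNReal.ofReal_tsum_of_nonneg
    (fun k => mul_nonneg (ha k) (indicator_nonneg (fun _ _ => zero_le_one) x)) hsum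
  simp only [hterm] at hsum'
  exact ENNReal.ofReal_ne_top (hsum'.trans h)

theorem summable_of_tsum_ofReal_mul_ne_top {a : ℕ → ℝ} (ha : ∀ k, 0 ≤ a k) {m : ℕ → ℝ≥0∞}
    {κ : ℝ} (hκ : 0 < κ) (hm : ∀ᶠ k in atTop, ENNReal.ofReal κ ≤ m k)
    (h : ∑' k, ENNReal.ofReal (a k) * m k ≠ ∞) : Summable a := by
  refine .of_norm_bounded_eventually_nat ((ENNReal.summable_toReal h).div_const κ) ?_
  filter_upwards [hm] with k hk
  have hfin : ENNReal.ofReal (a k) * m k ≠ ∞ := ENNReal.ne_top_of_tsum_ne_top h k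
  have hle := ENNReal.toReal_mono hfin (mul_le_mul_right hk (ENNReal.ofReal (a k)))
  rw [ENNReal.toReal_mul, ENNReal.toReal_ofReal (ha k), ENNReal.toReal_ofReal hκ.le] at hle
  rw [Real.norm_of_nonneg (ha k), le_div_iff₀ hκ]
  exact hle

theorem lt_one_of_ofReal_mul_lt_volume_inter_Ico {E : Set ℝ} {a b c : ℝ}
    (h : ENNReal.ofReal (c * (b - a)) < volume (E ∩ Ico a b)) : c < 1 := by
  have h' := h.trans_le (measure_mono inter_subset_right)
  rw [Real.volume_Ico, ENNReal.ofReal_lt_ofReal_iff'] at h'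
  nlinarith [h'.1, h'.2]

theorem sum_volume_Ico_le_of_inter_closedBall_nonempty (s : Finset (ℝ × ℝ))
    (hdisj : (s : Set (ℝ × ℝ)).PairwiseDisjoint fun p => Ico p.1 p.2) {x r δ : ℝ}
    (hs : ∀ p ∈ s, p.2 - p.1 < δ ∧ (Ico p.1 p.2 ∩ closedBall x r).Nonempty) :
    ∑ p ∈ s, volume (Ico p.1 p.2) ≤ ENNReal.ofReal (2 * r + 2 * δ) := by
  have hsub : ⋃ p ∈ s, Ico p.1 p.2 ⊆ Icc (x - r - δ) (x + r + δ) := by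
    intro z hz
    obtain ⟨p, hp, hzp⟩ := mem_iUnion₂.mp hz
    obtain ⟨hlen, y, hyp, hyx⟩ := hs p hp
    rw [Real.closedBall_eq_Icc] at hyx
    constructor <;> linarith [hzp.1, hzp.2, hyp.1, hyp.2, hyx.1, hyx.2]
  rw [← measure_biUnion_finset hdisj fun p _ => measurableSet_Ico]
  calc volume (⋃ p ∈ s, Ico p.1 p.2) ≤ volume (Icc (x - r - δ) (x + r + δ)) := measure_mono hsub
    _ = ENNReal.ofReal (2 * r + 2 * δ) := by rw [Real.volume_Icc]; ring_nf

theorem volume_le_volume_inter_add_of_partition (F : Finset (ℝ × ℝ))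
    (hdisj : ∀ p ∈ F, ∀ q ∈ F, p ≠ q → Disjoint (Ico p.1 p.2) (Ico q.1 q.2))
    {E B : Set ℝ} (hE : MeasurableSet E) {c δ x r : ℝ} (hc : 0 ≤ c)
    (hmesh : ∀ p ∈ F, p.2 - p.1 < δ)
    (hEc : ∀ p ∈ F, ENNReal.ofReal (c * (p.2 - p.1)) ≤ volume (E ∩ Ico p.1 p.2))
    (hB : B ⊆ (⋃ p ∈ F, Ico p.1 p.2) ∩ closedBall x r) :
    volume B ≤ volume (E ∩ B) + ENNReal.ofReal (1 - c) * ENNReal.ofReal (2 * r + 2 * δ) := by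
  classical
  set T := F.filter fun p => (Ico p.1 p.2 ∩ closedBall x r).Nonempty
  have hBT : B ⊆ ⋃ p ∈ T, Ico p.1 p.2 := by
    intro y hy
    obtain ⟨p, hp, hyp⟩ := mem_iUnion₂.mp (hB hy).1
    exact mem_biUnion (Finset.mem_filter.mpr ⟨hp, y, hyp, (hB hy).2⟩) hyp
  have hcell : ∀ p ∈ T,
      volume (Ico p.1 p.2 \ E) ≤ ENNReal.ofReal (1 - c) * volume (Ico p.1 p.2) := by
    intro p hp
    rw [ENNReal.ofReal_sub _ hc, ENNReal.ofReal_one]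
    refine measure_diff_le_of_mul_le_measure_inter _ hE.nullMeasurableSet measure_Ico_lt_top.ne ?_
    rw [Real.volume_Ico, ← ENNReal.ofReal_mul hc]
    exact hEc p (Finset.mem_filter.mp hp).1
  have hTdisj : (T : Set (ℝ × ℝ)).PairwiseDisjoint fun p => Ico p.1 p.2 :=
    fun p hp q hq => hdisj p (Finset.mem_filter.mp hp).1 q (Finset.mem_filter.mp hq).1
  calc volume B ≤ volume (E ∩ B) + ∑ p ∈ T, volume (Ico p.1 p.2 \ E) :=
        measure_le_measure_inter_add_sum_diff _ T _ hBT
    _ ≤ volume (E ∩ B) + ENNReal.ofReal (1 - c) * ∑ p ∈ T, volume (Ico p.1 p.2) := by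
        rw [Finset.mul_sum]; gcongr with p hp; exact hcell p hp
    _ ≤ volume (E ∩ B) + ENNReal.ofReal (1 - c) * ENNReal.ofReal (2 * r + 2 * δ) := by
        gcongr
        exact sum_volume_Ico_le_of_inter_closedBall_nonempty T hTdisj fun p hp =>
          ⟨hmesh p (Finset.mem_filter.mp hp).1, (Finset.mem_filter.mp hp).2⟩

theorem ofReal_mul_le_volume_inter_of_dense (F : Finset (ℝ × ℝ))
    (hdisj : ∀ p ∈ F, ∀ q ∈ F, p ≠ q → Disjoint (Ico p.1 p.2) (Ico q.1 q.2))
    {E B : Set ℝ} (hE : MeasurableSet E) {c x r : ℝ} (hc : 0 < c) (hc1 : c < 1) (hr : 0 < r)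
    (hmesh : ∀ p ∈ F, p.2 - p.1 < c * r / 4)
    (hEc : ∀ p ∈ F, ENNReal.ofReal (c * (p.2 - p.1)) ≤ volume (E ∩ Ico p.1 p.2))
    (hB : B ⊆ (⋃ p ∈ F, Ico p.1 p.2) ∩ closedBall x r)
    (hdense : ENNReal.ofReal (1 - c / 4) * volume (closedBall x r) ≤ volume B) :
    ENNReal.ofReal (c * r) ≤ volume (E ∩ B) := by
  have hcover := volume_le_volume_inter_add_of_partition F hdisj hE hc.le hmesh hEc hB
  rw [← ENNReal.ofReal_mul (by linarith)] at hcover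
  -- `(1 - c/4) · 2r - (1 - c)(2r + cr/2) - cr = (c + c²) r/2 ≥ 0`
  have hbudget : ENNReal.ofReal (c * r) + ENNReal.ofReal ((1 - c) * (2 * r + 2 * (c * r / 4)))
      ≤ ENNReal.ofReal (1 - c / 4) * volume (closedBall x r) := by
    rw [Real.volume_closedBall, ← ENNReal.ofReal_mul (by linarith),
      ← ENNReal.ofReal_add (by positivity) (mul_nonneg (by linarith) (by positivity))]
    exact ENNReal.ofReal_le_ofReal (by nlinarith [mul_pos hc hr, mul_pos (mul_pos hc hc) hr])
  exact (ENNReal.add_le_add_iff_right ENNReal.ofReal_ne_top).mp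
    (hbudget.trans (hdense.trans hcover))

theorem stmt_8_general (F : ℕ → Finset (ℝ × ℝ)) (E : ℕ → Set ℝ) (c : ℝ) (hc : 0 < c)
    (hpart : ∀ k, ⋃ p ∈ F k, Set.Ico p.1 p.2 = Set.Ico (0 : ℝ) 1)
    (hdisj : ∀ k, ∀ p ∈ F k, ∀ q ∈ F k, p ≠ q →
      Disjoint (Set.Ico p.1 p.2) (Set.Ico q.1 q.2))
    (hmesh : ∀ ε > (0 : ℝ), ∃ K, ∀ k ≥ K, ∀ p ∈ F k, p.2 - p.1 < ε)
    (hEmeas : ∀ k, MeasurableSet (E k))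
    (hEc : ∀ k, ∀ p ∈ F k,
      ENNReal.ofReal (c * (p.2 - p.1)) < volume (E k ∩ Set.Ico p.1 p.2))
    (a : ℕ → ℝ) (hapos : ∀ k, 0 < a k) (hadiv : ¬ Summable a) :
    ∀ᵐ x ∂(volume.restrict (Set.Ico (0 : ℝ) 1)),
      ¬ Summable fun k => a k * (E k).indicator (fun _ => (1 : ℝ)) x := by
  have hc1 : c < 1 := by
    have h0 : (0 : ℝ) ∈ ⋃ p ∈ F 0, Ico p.1 p.2 := hpart 0 ▸ left_mem_Ico.mpr one_pos
    obtain ⟨p, hp, -⟩ := mem_iUnion₂.mp h0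
    exact lt_one_of_ofReal_mul_lt_volume_inter_Ico (hEc 0 p hp)
  set f : ℝ → ℝ≥0∞ := fun x => ∑' k, (E k).indicator (fun _ => ENNReal.ofReal (a k)) x
  have hnull : ∀ M : ℕ, volume.restrict (Ico (0 : ℝ) 1) {x | f x ≤ M} = 0 := by
    intro M
    rw [Measure.restrict_apply' measurableSet_Ico]
    by_contra hD
    obtain ⟨x, r, hr, hdense⟩ := exists_closedBall_mul_measure_le_measure_inter volume hD
      (ENNReal.ofReal_lt_one.mpr (by linarith : 1 - c / 4 < 1))
    set B := {x | f x ≤ M} ∩ Ico (0 : ℝ) 1 ∩ closedBall x r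
    obtain ⟨K, hK⟩ := hmesh (c * r / 4) (by positivity)
    have hEB : ∀ k ≥ K, ENNReal.ofReal (c * r) ≤ volume (E k ∩ B) := fun k hk =>
      ofReal_mul_le_volume_inter_of_dense (F k) (hdisj k) (hEmeas k) hc hc1 hr (hK k hk)
        (fun p hp => (hEc k p hp).le) (fun y hy => ⟨hpart k ▸ hy.1.2, hy.2⟩) hdense
    have hbound := tsum_mul_measure_inter_le volume hEmeas (fun k => ENNReal.ofReal (a k))
      (B := B) fun y hy => hy.1.1
    have hB : volume B ≠ ∞ := ne_top_of_le_ne_top measure_closedBall_lt_top.ne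
      (measure_mono inter_subset_right)
    exact hadiv (summable_of_tsum_ofReal_mul_ne_top (fun k => (hapos k).le) (mul_pos hc hr)
      (eventually_atTop.mpr ⟨K, hEB⟩)
      (ne_top_of_le_ne_top (mul_ne_top (natCast_ne_top M) hB) hbound))
  filter_upwards [ae_eq_top_of_forall_measure_le_natCast_eq_zero _ hnull] with x hx
  exact not_summable_mul_indicator_of_tsum_indicator_eq_top (fun k => (hapos k).le) hx

/-- Lemma 8 of the paper: if `(F_k)` are finite interval partitions of `[0,1)` whose
mesh tends to `0`, each `E_k` occupies proportion `> c` of every cell of `F_k`, and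
`a_k > 0` with `∑ a_k = ∞`, then `∑ a_k 𝟙_{E_k}(x) = ∞` a.e. on `[0,1)`. -/
theorem stmt_8 (F : ℕ → Finset (ℝ × ℝ)) (E : ℕ → Set ℝ) (c : ℝ) (hc : 0 < c)
    (hlt : ∀ k, ∀ p ∈ F k, p.1 < p.2)
    (hpart : ∀ k, ⋃ p ∈ F k, Set.Ico p.1 p.2 = Set.Ico (0 : ℝ) 1)
    (hdisj : ∀ k, ∀ p ∈ F k, ∀ q ∈ F k, p ≠ q →
      Disjoint (Set.Ico p.1 p.2) (Set.Ico q.1 q.2))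
    (hmesh : ∀ ε > (0 : ℝ), ∃ K, ∀ k ≥ K, ∀ p ∈ F k, p.2 - p.1 < ε)
    (hEmeas : ∀ k, MeasurableSet (E k)) (hEsub : ∀ k, E k ⊆ Set.Ico (0 : ℝ) 1)
    (hEc : ∀ k, ∀ p ∈ F k,
      ENNReal.ofReal (c * (p.2 - p.1)) < volume (E k ∩ Set.Ico p.1 p.2))
    (a : ℕ → ℝ) (hapos : ∀ k, 0 < a k) (hadiv : ¬ Summable a) :
    ∀ᵐ x ∂(volume.restrict (Set.Ico (0 : ℝ) 1)),
      ¬ Summable fun k => a k * (E k).indicator (fun _ => (1 : ℝ)) x :=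
  stmt_8_general F E c hc hpart hdisj hmesh hEmeas hEc a hapos hadiv
end

section
/- Let φ : ℝ → ℝ be supported on a (possibly infinite) interval [A,B], continuous on [A,B], taking both positive and negative values there, and satisfying the Hölder-type estimate |φ(t) - φ(t')| ≤ c|t - t'|^α · (1+|t|)^{-(1+β)} for all t, t' ∈ [A,B], where c > 0 and 0 < α, β ≤ 1. Fix λ > 0 and let φ̄(x) = φ(x)·𝟙_{{|φ| ≥ λ}}(x) be the upper truncation of φ. Then any partition of ℝ into intervals each of length strictly less than (λ/c)^{1/α} is sign-preserving for φ̄, i.e. on each interval of the partition, φ̄ is either ≥ 0 everywhere or ≤ 0 everywhere. -/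
open Set

/-- Lemma 3 (part 1) of the paper: for a continuous, sign-changing function `φ`
supported on `[A,B]` satisfying the Hölder-type estimate
`|φ(t) - φ(t')| ≤ c|t-t'|^α (1+|t|)^{-(1+β)}`, every interval of length strictly
less than `(λ/c)^{1/α}` is sign-preserving for the upper truncation
`φ̄ = φ·𝟙_{|φ| ≥ λ}`. -/
theorem stmt_14 (A B c α β lam : ℝ) (hAB : A < B) (hc : 0 < c)
    (hα : 0 < α) (hα1 : α ≤ 1) (hβ : 0 < β) (hβ1 : β ≤ 1) (hlam : 0 < lam)
    (φ : ℝ → ℝ) (hsupp : Function.support φ ⊆ Set.Icc A B)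
    (hcont : ContinuousOn φ (Set.Icc A B))
    (hposval : ∃ t ∈ Set.Icc A B, 0 < φ t)
    (hnegval : ∃ t ∈ Set.Icc A B, φ t < 0)
    (hHolder : ∀ t ∈ Set.Icc A B, ∀ t' ∈ Set.Icc A B,
      |φ t - φ t'| ≤ c * |t - t'| ^ α * (1 + |t|) ^ (-(1 + β)))
    (a b : ℝ) (hlen : b - a < (lam / c) ^ (1 / α)) :
    (∀ x ∈ Set.Ico a b, 0 ≤ (if lam ≤ |φ x| then φ x else 0)) ∨
    (∀ x ∈ Set.Ico a b, (if lam ≤ |φ x| then φ x else 0) ≤ 0) := by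
  by_contra h
  push_neg at h
  obtain ⟨⟨x, hx, hxneg⟩, ⟨y, hy, hypos⟩⟩ := h
  -- extract sign info
  have hxtrue : lam ≤ |φ x| := by
    by_contra hf; simp [hf] at hxneg
  have hytrue : lam ≤ |φ y| := by
    by_contra hf; simp [hf] at hypos
  rw [if_pos hxtrue] at hxneg
  rw [if_pos hytrue] at hypos
  have hxlam : φ x ≤ -lam := by
    rcases abs_cases (φ x) with ⟨he, _⟩ | ⟨he, _⟩
    · linarith [he ▸ hxtrue]
    · linarith [he ▸ hxtrue]
  have hylam : lam ≤ φ y := by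
    rcases abs_cases (φ y) with ⟨he, _⟩ | ⟨he, _⟩
    · linarith [he ▸ hytrue]
    · linarith [he ▸ hytrue]
  have hxAB : x ∈ Set.Icc A B := hsupp (by simp [Function.mem_support]; linarith)
  have hyAB : y ∈ Set.Icc A B := hsupp (by simp [Function.mem_support]; linarith)
  have hH := hHolder y hyAB x hxAB
  have hdist : |y - x| < (lam / c) ^ (1 / α) := by
    rw [abs_lt]
    constructor
    · nlinarith [hx.1, hx.2, hy.1, hy.2]
    · nlinarith [hx.1, hx.2, hy.1, hy.2]
  have hdn : (0:ℝ) ≤ |y - x| := abs_nonneg _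
  have hpow : |y - x| ^ α < lam / c := by
    have := Real.rpow_lt_rpow hdn hdist hα
    rwa [← Real.rpow_mul (le_of_lt (div_pos hlam hc)), one_div_mul_cancel hα.ne',
      Real.rpow_one] at this
  have hfac : (1 + |y|) ^ (-(1 + β)) ≤ (1:ℝ) := by
    apply Real.rpow_le_one_of_one_le_of_nonpos
    · linarith [abs_nonneg y]
    · linarith
  have hfacpos : (0:ℝ) ≤ (1 + |y|) ^ (-(1 + β)) :=
    Real.rpow_nonneg (by linarith [abs_nonneg y]) _
  have hmul : c * |y - x| ^ α * (1 + |y|) ^ (-(1 + β)) < lam := by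
    have h1 : c * |y - x| ^ α * (1 + |y|) ^ (-(1 + β)) ≤ c * |y - x| ^ α := by
      have hcp : 0 ≤ c * |y - x| ^ α :=
        mul_nonneg hc.le (Real.rpow_nonneg hdn _)
      calc c * |y - x| ^ α * (1 + |y|) ^ (-(1 + β))
          ≤ c * |y - x| ^ α * 1 := by
            exact mul_le_mul_of_nonneg_left hfac hcp
        _ = c * |y - x| ^ α := mul_one _
    have h2 : c * |y - x| ^ α < c * (lam / c) :=
      mul_lt_mul_of_pos_left hpow hc
    have h3 : c * (lam / c) = lam := by field_simp
    linarith
  have habs : |φ y - φ x| ≥ 2 * lam := by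
    rw [abs_of_nonneg (by linarith)]
    linarith
  linarith
end

section
/- Let c₂, c₃, ε > 0 with c₂ < c₃·2^{ν₀} for some integer ν₀, let Δ be an interval and γ > 0, and let S̄, S̿ be nonnegative measurable functions on Δ satisfying: (c₁/ε)·∫_Δ S̿ ≤ c₂ γ |Δ| ≤ ∫_Δ S̄ and ‖S̄‖_{L^∞(Δ)} ≤ c₃ γ 2^{ν₀}, where c₁ > 0 is a constant. If ε < c₁ c₂ / (32 c₃ 2^{ν₀}), then |{x ∈ Δ : S̄(x) > 8 S̿(x)}| ≥ (c₂/(2 c₃ 2^{ν₀})) |Δ|. -/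
open MeasureTheory Set

/-!
Integrate `S̄ - 8 S̿` over `Δ`: its integral over `Δ` is at least `c₂γ|Δ|/2`, since the smallness of `ε` makes
`8 ∫ S̿ ≤ c₂γ|Δ|/2`. The integrand is at most `c₃γ2^{ν₀}`, and only contributes positively
where `S̄ > 8 S̿`, so that set has measure at least `c₂γ|Δ|/2 / (c₃γ2^{ν₀})`.
-/

theorem setIntegral_le_mul_measureReal_setOf_pos {α : Type*} [MeasurableSpace α]
    {μ : Measure α} {s : Set α} {f : α → ℝ} {M : ℝ} (hs : MeasurableSet s) (hμs : μ s ≠ ⊤)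
    (hfm : Measurable f) (hf : IntegrableOn f s μ) (hfM : ∀ x ∈ s, f x ≤ M) :
    ∫ x in s, f x ∂μ ≤ M * μ.real {x ∈ s | 0 < f x} := by
  have hpos : MeasurableSet {x | 0 < f x} := measurableSet_lt measurable_const hfm
  calc ∫ x in s, f x ∂μ ≤ ∫ x in s, {x | 0 < f x}.indicator (fun _ ↦ M) x ∂μ := by
        refine setIntegral_mono_on hf ((integrableOn_const hμs).indicator hpos) hs fun x hx ↦ ?_
        by_cases hfx : 0 < f x
        · simpa [hfx] using hfM x hx
        · simpa [hfx] using not_lt.1 hfx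
    _ = M * μ.real {x ∈ s | 0 < f x} := by
        rw [setIntegral_indicator hpos, setIntegral_const, smul_eq_mul, mul_comm]
        rfl

/-- Measure-theoretic core of Lemma 7: if `S̄` has average at least `c₂γ` and sup at
most `c₃γ2^{ν₀}` on the interval `Δ = (a,b]`, while `S̿` has small average
(`(c₁/ε)∫S̿ ≤ c₂γ|Δ|` with `ε < c₁c₂/(32 c₃ 2^{ν₀})`), then `S̄ > 8 S̿` on a subset
of `Δ` of measure at least `(c₂/(2c₃2^{ν₀}))|Δ|`. -/
theorem stmt_18 (c₁ c₂ c₃ ε γ : ℝ) (ν : ℤ)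
    (hc₁ : 0 < c₁) (hc₂ : 0 < c₂) (hc₃ : 0 < c₃) (hε : 0 < ε) (hγ : 0 < γ)
    (hlt : c₂ < c₃ * 2 ^ ν)
    (a b : ℝ) (hab : a < b)
    (S1 S2 : ℝ → ℝ) (hS1m : Measurable S1) (hS2m : Measurable S2)
    (hS1nn : ∀ x ∈ Set.Ioc a b, 0 ≤ S1 x) (hS2nn : ∀ x ∈ Set.Ioc a b, 0 ≤ S2 x)
    (hS2int : IntegrableOn S2 (Set.Ioc a b) volume)
    (h1 : (c₁ / ε) * ∫ x in Set.Ioc a b, S2 x ≤ c₂ * γ * (b - a))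
    (h2 : c₂ * γ * (b - a) ≤ ∫ x in Set.Ioc a b, S1 x)
    (hsup : ∀ x ∈ Set.Ioc a b, S1 x ≤ c₃ * γ * 2 ^ ν)
    (hεsmall : ε < c₁ * c₂ / (32 * c₃ * 2 ^ ν)) :
    ENNReal.ofReal (c₂ / (2 * c₃ * 2 ^ ν) * (b - a)) ≤
      volume {x ∈ Set.Ioc a b | 8 * S2 x < S1 x} := by
  have hpow : (0 : ℝ) < 2 ^ ν := by positivity
  have hS1int : IntegrableOn S1 (Ioc a b) volume :=
    Measure.integrableOn_of_bounded measure_Ioc_lt_top.ne hS1m.aestronglyMeasurable <|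
      (ae_restrict_mem measurableSet_Ioc).mono fun x hx ↦ by
        rw [Real.norm_of_nonneg (hS1nn x hx)]
        exact hsup x hx
  have hε16 : 16 * ε ≤ c₁ := by
    rw [lt_div_iff₀ (by positivity)] at hεsmall
    nlinarith [mul_pos hc₁ (sub_pos.2 hlt)]
  have hS2small : 16 * ∫ x in Ioc a b, S2 x ≤ c₂ * γ * (b - a) := by
    rw [div_mul_eq_mul_div, div_le_iff₀ hε] at h1
    have hR : 0 ≤ c₂ * γ * (b - a) := by have := sub_pos.2 hab; positivity
    nlinarith
  have hdiff : c₂ * γ * (b - a) / 2 ≤ ∫ x in Ioc a b, (S1 x - 8 * S2 x) := by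
    rw [integral_sub hS1int (hS2int.const_mul 8), integral_const_mul]
    linarith
  have hmass : ∫ x in Ioc a b, (S1 x - 8 * S2 x) ≤
      c₃ * γ * 2 ^ ν * volume.real {x ∈ Ioc a b | 8 * S2 x < S1 x} := by
    simpa only [sub_pos] using setIntegral_le_mul_measureReal_setOf_pos
      (f := fun x ↦ S1 x - 8 * S2 x) measurableSet_Ioc
      measure_Ioc_lt_top.ne (hS1m.sub (hS2m.const_mul 8)) (hS1int.sub (hS2int.const_mul 8))
      fun x hx ↦ by linarith [hsup x hx, hS2nn x hx]
  refine ENNReal.ofReal_le_of_le_toReal ?_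
  rw [measureReal_def] at hmass
  rw [div_mul_eq_mul_div, div_le_iff₀ (by positivity)]
  exact le_of_mul_le_mul_left (by linarith) hγ
end
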